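/- For any n ≥ 3, the strong domatic number of the corona C_n ∘ K_1 equals 2. -/

import Mathlib

open SimpleGraph

open scoped Classical

/-- `D` is a strong dominating set: every vertex outside `D` has a neighbor in `D`
of at least its own degree. -/
def IsStrongDominating {V : Type*} [Fintype V] (G : SimpleGraph V) (D : Set V) : Prop :=
  ∀ x ∉ D, ∃ y ∈ D, G.Adj x y ∧ G.degree x ≤ G.degree y

/-- The strong domatic number: the largest `n` such that the vertex set can be
partitioned into `n` strong dominating sets (as fibers of a map to `Fin n`). -/
noncomputable def strongDomatic {V : Type*} [Fintype V] (G : SimpleGraph V) : ℕ :=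
  sSup {n | ∃ f : V → Fin n, ∀ i : Fin n, IsStrongDominating G (f ⁻¹' {i})}

/-- The corona `C n ∘ K₁`: the cycle on the vertices `(i, 0)` together with a
pendant vertex `(i, 1)` attached to each cycle vertex. -/
def cycleCoronaK1 (n : ℕ) : SimpleGraph (Fin n × Fin 2) :=
  SimpleGraph.fromRel fun a b =>
    (a.2 = 0 ∧ b.2 = 0 ∧ (cycleGraph n).Adj a.1 b.1) ∨ (a.1 = b.1 ∧ a.2 = 0 ∧ b.2 = 1)

lemma corona_adj {n : ℕ} (a b : Fin n × Fin 2) :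
    (cycleCoronaK1 n).Adj a b ↔
      (a.2 = 0 ∧ b.2 = 0 ∧ (cycleGraph n).Adj a.1 b.1) ∨
      (a.1 = b.1 ∧ ((a.2 = 0 ∧ b.2 = 1) ∨ (a.2 = 1 ∧ b.2 = 0))) := by
  simp only [cycleCoronaK1, fromRel_adj]
  constructor
  · rintro ⟨hne, (⟨h1,h2,h3⟩|⟨h1,h2,h3⟩)|(⟨h1,h2,h3⟩|⟨h1,h2,h3⟩)⟩
    · exact Or.inl ⟨h1,h2,h3⟩
    · exact Or.inr ⟨h1, Or.inl ⟨h2,h3⟩⟩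
    · exact Or.inl ⟨h2,h1,h3.symm⟩
    · exact Or.inr ⟨h1.symm, Or.inr ⟨h3,h2⟩⟩
  · rintro (⟨h1,h2,h3⟩|⟨h1,⟨h2,h3⟩|⟨h2,h3⟩⟩)
    · exact ⟨fun h => h3.ne (congrArg Prod.fst h), Or.inl (Or.inl ⟨h1,h2,h3⟩)⟩
    · exact ⟨fun h => by simp [h, h3] at h2, Or.inl (Or.inr ⟨h1,h2,h3⟩)⟩
    · exact ⟨fun h => by simp [h, h3] at h2, Or.inr (Or.inr ⟨h1.symm,h3,h2⟩)⟩

lemma pendant_nf {n : ℕ} (i : Fin n) :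
    (cycleCoronaK1 n).neighborFinset (i, 1) = {(i, 0)} := by
  ext ⟨j, k⟩
  simp only [mem_neighborFinset, corona_adj, Finset.mem_singleton, Prod.mk.injEq]
  constructor
  · rintro (⟨h,_⟩|⟨h1,⟨h2,_⟩|⟨_,h3⟩⟩) <;> simp_all
  · rintro ⟨rfl, rfl⟩; exact Or.inr ⟨rfl, Or.inr ⟨by trivial, by trivial⟩⟩

lemma pendant_degree {n : ℕ} (i : Fin n) :
    (cycleCoronaK1 n).degree (i, 1) = 1 := by
  rw [SimpleGraph.degree, pendant_nf]; simp

open Fin.CommRing in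
lemma cyc_nf {m : ℕ} (i : Fin (m + 3)) :
    (cycleCoronaK1 (m + 3)).neighborFinset (i, 0) = {(i - 1, 0), (i + 1, 0), (i, 1)} := by
  ext ⟨j, k⟩
  have hadj : ∀ u v : Fin (m+3), (cycleGraph (m+3)).Adj u v ↔ u - v = 1 ∨ v - u = 1 :=
    fun u v => cycleGraph_adj
  simp only [mem_neighborFinset, corona_adj, Finset.mem_insert, Finset.mem_singleton,
    Prod.mk.injEq, hadj]
  constructor
  · rintro (⟨_, h2, h3 | h3⟩ | ⟨h1, ⟨_, h3⟩ | ⟨h2, _⟩⟩)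
    · exact Or.inl ⟨by linear_combination -h3, h2⟩
    · exact Or.inr (Or.inl ⟨by linear_combination h3, h2⟩)
    · exact Or.inr (Or.inr ⟨h1.symm, h3⟩)
    · simp at h2
  · rintro (⟨rfl, rfl⟩ | ⟨rfl, rfl⟩ | ⟨rfl, rfl⟩)
    · exact Or.inl ⟨by trivial, by trivial, Or.inl (by ring)⟩
    · exact Or.inl ⟨by trivial, by trivial, Or.inr (by ring)⟩
    · exact Or.inr ⟨rfl, Or.inl ⟨by trivial, by trivial⟩⟩

open Fin.CommRing in
lemma cyc_degree {m : ℕ} (i : Fin (m + 3)) :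
    (cycleCoronaK1 (m + 3)).degree (i, 0) = 3 := by
  rw [SimpleGraph.degree, cyc_nf]
  have h1 : i - 1 ≠ i + 1 := by
    intro h
    have h2 : (i + 1) - (i - 1) = 0 := by rw [h, sub_self]
    have h3 : (i + 1) - (i - 1) = 2 := by ring
    rw [h3] at h2
    have := congrArg Fin.val h2
    simp [Fin.ext_iff, Nat.mod_eq_of_lt (show 2 < m + 3 by omega)] at this
  rw [Finset.card_insert_of_notMem (by simp [h1]),
      Finset.card_insert_of_notMem (by simp), Finset.card_singleton]

lemma cyc_adj_of {m : ℕ} (u v : Fin (m+3))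
    (h : v.val = u.val + 1 ∨ u.val = v.val + 1 ∨ (u.val = m + 2 ∧ v.val = 0) ∨
      (v.val = m + 2 ∧ u.val = 0)) :
    (cycleGraph (m+3)).Adj u v := by
  have hu := u.isLt; have hv := v.isLt
  rw [cycleGraph_adj]
  rcases h with h | h | ⟨h1, h2⟩ | ⟨h1, h2⟩
  · right; apply Fin.ext; rw [Fin.sub_def, Fin.val_one]
    have e : (m + 3 - u.val) + v.val = (m + 3) + 1 := by omega
    show ((m + 3 - u.val) + v.val) % (m + 3) = 1
    rw [e, Nat.add_mod_left]; exact Nat.mod_eq_of_lt (by omega)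
  · left; apply Fin.ext; rw [Fin.sub_def, Fin.val_one]
    have e : (m + 3 - v.val) + u.val = (m + 3) + 1 := by omega
    show ((m + 3 - v.val) + u.val) % (m + 3) = 1
    rw [e, Nat.add_mod_left]; exact Nat.mod_eq_of_lt (by omega)
  · right; apply Fin.ext; rw [Fin.sub_def, Fin.val_one]
    have e : (m + 3 - u.val) + v.val = 1 := by omega
    show ((m + 3 - u.val) + v.val) % (m + 3) = 1
    rw [e]; exact Nat.mod_eq_of_lt (by omega)
  · left; apply Fin.ext; rw [Fin.sub_def, Fin.val_one]
    have e : (m + 3 - v.val) + u.val = 1 := by omega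
    show ((m + 3 - v.val) + u.val) % (m + 3) = 1
    rw [e]; exact Nat.mod_eq_of_lt (by omega)

/-- Upper bound: any strong domatic partition has at most 2 classes. -/
lemma corona_key_le {n : ℕ} (hn : 3 ≤ n) (k : ℕ)
    (hk : ∃ f : Fin n × Fin 2 → Fin k,
      ∀ i : Fin k, IsStrongDominating (cycleCoronaK1 n) (f ⁻¹' {i})) : k ≤ 2 := by
  by_contra hlt
  push_neg at hlt
  obtain ⟨f, hf⟩ := hk
  set i0 : Fin n := ⟨0, by omega⟩ with hi0
  set p : Fin n × Fin 2 := (i0, 1) with hp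
  set t : Fin k := f p with ht
  have huniq : ∀ c : Fin k, c ≠ t → f (i0, 0) = c := by
    intro c hc
    obtain ⟨y, hyD, hadj, _⟩ := hf c p (by
      simp only [Set.mem_preimage, Set.mem_singleton_iff]
      exact fun h => hc (ht.trans h).symm)
    have hy : y = (i0, 0) := by
      have := (mem_neighborFinset (cycleCoronaK1 n) p y).mpr hadj
      rw [hp, pendant_nf] at this
      simpa using this
    rw [← hy]
    simpa using hyD
  set c1 : Fin k := if t.val = 0 then ⟨1, by omega⟩ else ⟨0, by omega⟩ with hc1
  set c2 : Fin k := if t.val = 2 then ⟨1, by omega⟩ else ⟨2, by omega⟩ with hc2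
  have h1 : c1 ≠ t := by rw [hc1]; split_ifs with h <;> simp [Fin.ext_iff] <;> omega
  have h2 : c2 ≠ t := by rw [hc2]; split_ifs with h <;> simp [Fin.ext_iff] <;> omega
  have h12 : c1 ≠ c2 := by
    rw [hc1, hc2]; split_ifs with h h' h' <;> simp [Fin.ext_iff] <;> omega
  exact h12 ((huniq c1 h1).symm.trans (huniq c2 h2))

/-- Lower bound: an explicit strong domatic 2-partition. -/
lemma corona_mem_two (m : ℕ) :
    ∃ f : Fin (m + 3) × Fin 2 → Fin 2,
      ∀ i : Fin 2, IsStrongDominating (cycleCoronaK1 (m + 3)) (f ⁻¹' {i}) := by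
  refine ⟨fun x => ⟨(x.1.val + x.2.val) % 2, by omega⟩, ?_⟩
  intro c x hx
  simp only [Set.mem_preimage, Set.mem_singleton_iff] at hx
  have hcv := c.isLt
  obtain ⟨⟨iv, hi⟩, ⟨jv, hj⟩⟩ := x
  interval_cases jv
  · -- cycle vertex; hx : parity iv ≠ c
    have hxc : iv % 2 ≠ c.val := by
      intro h; exact hx (Fin.ext (by simpa using h))
    by_cases hlt : iv < m + 2
    · refine ⟨(⟨iv + 1, by omega⟩, 0), ?_, ?_, ?_⟩
      · simp only [Set.mem_preimage, Set.mem_singleton_iff]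
        exact Fin.ext (by simp; omega)
      · exact (corona_adj _ _).mpr (Or.inl ⟨rfl, rfl, cyc_adj_of _ _ (Or.inl rfl)⟩)
      · rw [show ((⟨iv, hi⟩, ⟨0, hj⟩) : Fin (m+3) × Fin 2) = (⟨iv, hi⟩, (0 : Fin 2)) from rfl,
          cyc_degree, cyc_degree]
    · have hiv : iv = m + 2 := by omega
      by_cases hm : m % 2 = 1
      · refine ⟨(⟨0, by omega⟩, 0), ?_, ?_, ?_⟩
        · simp only [Set.mem_preimage, Set.mem_singleton_iff]
          exact Fin.ext (by simp; omega)
        · exact (corona_adj _ _).mpr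
            (Or.inl ⟨rfl, rfl, cyc_adj_of _ _ (Or.inr (Or.inr (Or.inl ⟨hiv, rfl⟩)))⟩)
        · rw [show ((⟨iv, hi⟩, ⟨0, hj⟩) : Fin (m+3) × Fin 2) = (⟨iv, hi⟩, (0 : Fin 2)) from rfl,
            cyc_degree, cyc_degree]
      · refine ⟨(⟨m + 1, by omega⟩, 0), ?_, ?_, ?_⟩
        · simp only [Set.mem_preimage, Set.mem_singleton_iff]
          exact Fin.ext (by simp; omega)
        · exact (corona_adj _ _).mpr
            (Or.inl ⟨rfl, rfl, cyc_adj_of _ _ (Or.inr (Or.inl (by simp [hiv])))⟩)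
        · rw [show ((⟨iv, hi⟩, ⟨0, hj⟩) : Fin (m+3) × Fin 2) = (⟨iv, hi⟩, (0 : Fin 2)) from rfl,
            cyc_degree, cyc_degree]
  · -- pendant vertex
    have hxc : (iv + 1) % 2 ≠ c.val := by
      intro h; exact hx (Fin.ext (by simpa using h))
    refine ⟨(⟨iv, hi⟩, 0), ?_, ?_, ?_⟩
    · simp only [Set.mem_preimage, Set.mem_singleton_iff]
      exact Fin.ext (by simp; omega)
    · exact (corona_adj _ _).mpr (Or.inr ⟨rfl, Or.inr ⟨rfl, rfl⟩⟩)
    · rw [show ((⟨iv, hi⟩, ⟨1, hj⟩) : Fin (m+3) × Fin 2) = (⟨iv, hi⟩, (1 : Fin 2)) from rfl,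
          pendant_degree, cyc_degree]; omega

theorem stmt_12 (n : ℕ) (hn : 3 ≤ n) :
    strongDomatic (cycleCoronaK1 n) = 2 := by
  obtain ⟨m, rfl⟩ : ∃ m, n = m + 3 := ⟨n - 3, by omega⟩
  have hmem : 2 ∈ {k | ∃ f : Fin (m + 3) × Fin 2 → Fin k,
      ∀ i : Fin k, IsStrongDominating (cycleCoronaK1 (m + 3)) (f ⁻¹' {i})} :=
    corona_mem_two m
  apply le_antisymm
  · exact csSup_le ⟨2, hmem⟩ (fun k hk => corona_key_le hn k hk)
  · exact le_csSup ⟨2, fun k hk => corona_key_le hn k hk⟩ hmem
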